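/- arXiv:1804.03808 — 5 statements merged into one kernel-verified Lean document; each statement's English description precedes it below -/
import Mathlib

section
/- Let u ≥ 3 be an integer with u ≡ 3 (mod 10) or u ≡ 7 (mod 10). Suppose that at least one of the following holds: (1) v_2(u²-1) is even; (2) there exists an odd prime p with p ≡ 2, 3, or 4 (mod 5) such that v_p(u+1) is odd or v_p(u-1) is odd. Then there is no ((u²+1)/2, (u-1)²/4, (u-1)(u-3)/8) cyclic difference set in ℤ/((u²+1)/2)ℤ, and consequently there is no binary sequence of period (u²+1)/2 with all nontrivial autocorrelation values equal to 1. -/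
/-- A binary sequence of period `n`: values in `{-1, 1}` and `a (i + n) = a i`. -/
def IsBinarySeq (n : ℕ) (a : ℤ → ℤ) : Prop :=
  (∀ i : ℤ, a i = -1 ∨ a i = 1) ∧ ∀ i : ℤ, a (i + n) = a i

/-- The autocorrelation of `a` (period `n`) at shift `t`. -/
def autocorr (n : ℕ) (a : ℤ → ℤ) (t : ℤ) : ℤ :=
  ∑ i ∈ Finset.range n, a i * a (i + t)

/-- All nontrivial autocorrelation values of `a` are equal to `d`. -/
def HasConstAutocorr (n : ℕ) (a : ℤ → ℤ) (d : ℤ) : Prop :=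
  ∀ t : ℤ, 1 ≤ t → t ≤ (n : ℤ) - 1 → autocorr n a t = d

/-- `D` is an `(n, k, λ)` cyclic difference set in `ℤ/nℤ`. -/
def IsCDS (n k lam : ℕ) (D : Finset (ZMod n)) : Prop :=
  D.card = k ∧ ∀ g : ZMod n, g ≠ 0 →
    ((D ×ˢ D).filter (fun q => q.1 - q.2 = g)).card = lam

/-- `a` is semiprimitive modulo `b`: some power of `a` is `≡ -1 (mod b)`. -/
def Semiprimitive (a : ℤ) (b : ℕ) : Prop :=
  ∃ c : ℕ, 0 < c ∧ Int.ModEq (b : ℤ) (a ^ c) (-1)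

/-- `m` is a quadratic non-residue modulo `e`. -/
def IsQNR (m : ℤ) (e : ℕ) : Prop :=
  ¬ ((e : ℤ) ∣ m) ∧ ¬ ∃ x : ℤ, Int.ModEq (e : ℤ) m (x ^ 2)

/-!
A binary sequence of period `n = (u² + 1)/2` whose off-peak autocorrelations all equal `1` has
`(∑ a)² = 2n - 1 = u²`, and the positions carrying its minority sign form an
`(n, (u - 1)²/4, (u - 1)(u - 3)/8)` cyclic difference set `D`; so it suffices to exclude these.

Since `5 ∣ n`, `x ↦ ζ^x` for a primitive fifth root of unity `ζ` is a character of `ℤ/nℤ`, and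
`y = ∑_{x ∈ D} ζ^x ∈ ℤ[ζ]` satisfies `y · ȳ = k - λ = (u² - 1)/8`. When `p^j ≡ -1 (mod 5)`,
complex conjugation agrees with `x ↦ x^(p^j)` modulo `p`, so `p ∣ y ȳ` forces `p ∣ y^(p^j+1)`, hence
`p ∣ y` (the ring `ℤ[ζ]/p` is reduced as `p ≠ 5`). Dividing `y` by `p` repeatedly shows that
`v_p(y ȳ)` is even, while the hypothesis makes `v_p((u² - 1)/8)` odd for such a `p`.
-/

open Polynomial

section DifferenceSet

variable {G R : Type*} [AddCommGroup G] [Fintype G] [DecidableEq G] [CommRing R]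

theorem AddChar.sum_mul_sum_neg_eq (ψ : AddChar G R) (D : Finset G) :
    (∑ x ∈ D, ψ x) * (∑ y ∈ D, ψ (-y)) =
      ∑ g, ((D ×ˢ D).filter (fun q => q.1 - q.2 = g)).card • ψ g := by
  rw [Finset.sum_mul_sum, ← Finset.sum_product',
    ← Finset.sum_fiberwise (D ×ˢ D) (fun q => q.1 - q.2)]
  refine Fintype.sum_congr _ _ fun g => ?_
  rw [← Finset.sum_const]
  refine Finset.sum_congr rfl fun q hq => ?_
  rw [← (Finset.mem_filter.mp hq).2, ← AddChar.map_add_eq_mul, sub_eq_add_neg]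

theorem AddChar.sum_mul_sum_neg_eq_sub [IsDomain R] {ψ : AddChar G R} (hψ : ψ ≠ 1)
    {D : Finset G} {k lam : ℕ} (hk : D.card = k)
    (hlam : ∀ g : G, g ≠ 0 → ((D ×ˢ D).filter (fun q => q.1 - q.2 = g)).card = lam) :
    (∑ x ∈ D, ψ x) * (∑ y ∈ D, ψ (-y)) = k - lam := by
  have hdiag : (D ×ˢ D).filter (fun q => q.1 - q.2 = 0) = D.diag := by
    ext ⟨x, y⟩
    simp only [Finset.mem_filter, Finset.mem_product, Finset.mem_diag, sub_eq_zero]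
    grind
  have hsum : ∑ g ∈ Finset.univ.erase 0, ψ g = -1 := by
    rw [Finset.sum_erase_eq_sub (Finset.mem_univ 0), AddChar.sum_eq_zero_of_ne_one hψ,
      AddChar.map_zero_eq_one, zero_sub]
  rw [ψ.sum_mul_sum_neg_eq, ← Finset.add_sum_erase _ _ (Finset.mem_univ 0), hdiag,
    Finset.diag_card, hk, AddChar.map_zero_eq_one,
    Finset.sum_congr rfl fun g hg => by rw [hlam g (Finset.ne_of_mem_erase hg)],
    ← Finset.smul_sum, hsum]
  simp [sub_eq_add_neg]

end DifferenceSet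

theorem two_mul_card_filter_eq {ι : Type*} [Fintype ι] {b : ι → ℤ} {e : ℤ}
    (hb : ∀ z, b z = -1 ∨ b z = 1) (he : e = -1 ∨ e = 1) :
    2 * ((Finset.univ.filter (fun z => b z = e)).card : ℤ) = Fintype.card ι + e * ∑ z, b z := by
  rw [Finset.natCast_card_filter, Finset.mul_sum, Finset.mul_sum, ← Finset.card_univ,
    Finset.cast_card, ← Finset.sum_add_distrib]
  refine Fintype.sum_congr _ _ fun z => ?_
  rcases hb z with h | h <;> rcases he with rfl | rfl <;> simp [h]

section BinarySequence

variable {G : Type*} [AddCommGroup G]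

theorem sum_sum_mul_add_eq_sq [Fintype G] (b : G → ℤ) :
    ∑ g, ∑ z, b z * b (z + g) = (∑ z, b z) ^ 2 := by
  rw [Finset.sum_comm, sq, Finset.sum_mul]
  refine Fintype.sum_congr _ _ fun z => ?_
  rw [← Finset.mul_sum]
  exact congrArg _ (Equiv.sum_comp (Equiv.addLeft z) b)

variable [DecidableEq G]

theorem card_filter_sub_eq (D : Finset G) (g : G) :
    ((D ×ˢ D).filter (fun q => q.1 - q.2 = g)).card = (D.filter (fun z => z + g ∈ D)).card := by
  refine Finset.card_nbij' Prod.snd (fun z => (z + g, z)) ?_ ?_ ?_ ?_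
  · intro q hq
    simp only [Finset.coe_filter, Finset.mem_product] at hq ⊢
    exact ⟨hq.1.2, by simpa [← hq.2] using hq.1.1⟩
  · intro z hz
    simp only [Finset.coe_filter, Finset.mem_product] at hz ⊢
    exact ⟨⟨hz.2, hz.1⟩, add_sub_cancel_left z g⟩
  · intro q hq
    simp only [Finset.coe_filter] at hq
    exact Prod.ext (by simp [← hq.2]) rfl
  · intro z _
    rfl

theorem four_mul_card_filter_sub_eq [Fintype G] {b : G → ℤ} {e : ℤ}
    (hb : ∀ z, b z = -1 ∨ b z = 1) (he : e = -1 ∨ e = 1) (g : G) :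
    4 * (((Finset.univ.filter (fun z => b z = e) ×ˢ Finset.univ.filter (fun z => b z = e)).filter
        (fun q => q.1 - q.2 = g)).card : ℤ) =
      Fintype.card G + 2 * e * ∑ z, b z + ∑ z, b z * b (z + g) := by
  have hshift : ∑ z, b (z + g) = ∑ z, b z := Equiv.sum_comp (Equiv.addRight g) b
  rw [show 2 * e * ∑ z, b z = e * ∑ z, b z + e * ∑ z, b (z + g) by rw [hshift]; ring,
    card_filter_sub_eq, Finset.filter_filter, Finset.natCast_card_filter, Finset.mul_sum,
    Finset.mul_sum, Finset.mul_sum, ← Finset.card_univ, Finset.cast_card,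
    ← Finset.sum_add_distrib, ← Finset.sum_add_distrib, ← Finset.sum_add_distrib]
  refine Fintype.sum_congr _ _ fun z => ?_
  rcases hb z with h | h <;> rcases hb (z + g) with h' | h' <;> rcases he with rfl | rfl <;>
    simp [h, h']

end BinarySequence

theorem ZMod.sum_range_natCast {M : Type*} [AddCommMonoid M] (n : ℕ) [NeZero n]
    (f : ZMod n → M) : ∑ i ∈ Finset.range n, f i = ∑ z : ZMod n, f z := by
  refine Finset.sum_nbij' (↑) ZMod.val (fun _ _ => Finset.mem_univ _)
    (fun z _ => Finset.mem_range.mpr z.val_lt) (fun i hi => ?_) (fun z _ => ZMod.natCast_zmod_val z)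
    (fun _ _ => rfl)
  exact ZMod.val_cast_of_lt (Finset.mem_range.mp hi)

theorem Function.Periodic.apply_val_intCast {α : Type*} {n : ℕ} [NeZero n] {a : ℤ → α}
    (ha : Function.Periodic a n) (m : ℤ) : a ((m : ZMod n).val) = a m := by
  rw [ZMod.val_intCast, Int.emod_def, mul_comm]
  exact ha.sub_int_mul_eq _

theorem autocorr_val_eq_sum {n : ℕ} [NeZero n] {a : ℤ → ℤ} (ha : Function.Periodic a n)
    (g : ZMod n) :
    autocorr n a g.val = ∑ z : ZMod n, a z.val * a (z + g).val := by
  rw [autocorr, ← ZMod.sum_range_natCast]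
  refine Finset.sum_congr rfl fun i _ => ?_
  rw [← ha.apply_val_intCast i, ← ha.apply_val_intCast (i + g.val)]
  simp

theorem exists_difference_counts_of_hasConstAutocorr_one {n : ℕ} [NeZero n] {a : ℤ → ℤ}
    (ha : IsBinarySeq n a) (hC : HasConstAutocorr n a 1) {u : ℤ} (hu : u ^ 2 = 2 * n - 1) :
    ∃ D : Finset (ZMod n), 2 * (D.card : ℤ) = n - u ∧ ∀ g : ZMod n, g ≠ 0 →
      4 * (((D ×ˢ D).filter (fun q => q.1 - q.2 = g)).card : ℤ) = n - 2 * u + 1 := by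
  set b : ZMod n → ℤ := fun z => a z.val
  have hb : ∀ z, b z = -1 ∨ b z = 1 := fun z => ha.1 _
  have hCb : ∀ g : ZMod n, g ≠ 0 → ∑ z, b z * b (z + g) = 1 := fun g hg => by
    rw [← autocorr_val_eq_sum ha.2]
    refine hC _ (by exact_mod_cast Nat.one_le_iff_ne_zero.mpr ((ZMod.val_ne_zero g).mpr hg)) ?_
    linarith [(Nat.cast_lt (α := ℤ)).mpr g.val_lt]
  have hb2 : ∀ z, b z * b (z + 0) = 1 := fun z => by rcases hb z with h | h <;> simp [h]
  have hS : (∑ z, b z) ^ 2 = u ^ 2 := by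
    rw [hu, ← sum_sum_mul_add_eq_sq, ← Finset.add_sum_erase _ _ (Finset.mem_univ 0),
      Finset.sum_congr rfl fun g hg => hCb g (Finset.ne_of_mem_erase hg),
      Fintype.sum_congr _ _ hb2, Finset.sum_const, Finset.sum_const,
      Finset.card_erase_of_mem (Finset.mem_univ _), Finset.card_univ, ZMod.card]
    have := NeZero.one_le (n := n)
    simp only [nsmul_eq_mul, mul_one]
    omega
  obtain ⟨e, he, heS⟩ : ∃ e : ℤ, (e = -1 ∨ e = 1) ∧ e * ∑ z, b z = -u := by
    rcases sq_eq_sq_iff_eq_or_eq_neg.mp hS with h | h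
    · exact ⟨-1, Or.inl rfl, by rw [h]; ring⟩
    · exact ⟨1, Or.inr rfl, by rw [h]; ring⟩
  refine ⟨Finset.univ.filter (fun z => b z = e), ?_, fun g hg => ?_⟩
  · rw [two_mul_card_filter_eq hb he, heS, ZMod.card]
    ring
  · rw [four_mul_card_filter_sub_eq hb he, hCb g hg, mul_assoc, heS, ZMod.card]
    ring

theorem even_of_mul_map_eq_pow_mul {R : Type*} [CommRing R] [IsDomain R] (σ : R →+* R) {P : R}
    (hP : P ≠ 0) (hσP : σ P = P) (hdvd : ∀ x, P ∣ x * σ x → P ∣ x) {w : R} (hw : ¬ P ∣ w)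
    {a : ℕ} {x : R} (h : x * σ x = P ^ a * w) : Even a := by
  induction a using Nat.twoStepInduction generalizing x with
  | zero => exact Even.zero
  | one =>
    obtain ⟨y, rfl⟩ := hdvd x (h ▸ dvd_mul_of_dvd_left (dvd_pow_self P one_ne_zero) w)
    rw [map_mul, hσP] at h
    exact absurd ⟨y * σ y, mul_left_cancel₀ hP (by linear_combination -h)⟩ hw
  | more a ih _ =>
    obtain ⟨y, rfl⟩ := hdvd x (h ▸ dvd_mul_of_dvd_left (dvd_pow_self P (by omega)) w)
    rw [map_mul, hσP] at h
    exact (ih (x := y) (mul_left_cancel₀ (pow_ne_zero 2 hP) (by linear_combination h))).add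
      even_two

abbrev CyclotomicIntegers (ℓ : ℕ) : Type := AdjoinRoot (cyclotomic ℓ ℤ)

namespace CyclotomicIntegers

variable {ℓ : ℕ}

noncomputable abbrev zeta (ℓ : ℕ) : CyclotomicIntegers ℓ := AdjoinRoot.root _

instance [NeZero ℓ] : IsDomain (CyclotomicIntegers ℓ) :=
  AdjoinRoot.isDomain_of_prime (cyclotomic.irreducible (NeZero.pos ℓ)).prime

theorem natCast_dvd_mk_iff {p : ℕ} [Fact p.Prime] (Q : ℤ[X]) :
    (p : CyclotomicIntegers ℓ) ∣ AdjoinRoot.mk _ Q ↔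
      cyclotomic ℓ (ZMod p) ∣ Q.map (Int.castRingHom (ZMod p)) := by
  constructor
  · rintro ⟨y, hy⟩
    obtain ⟨Y, rfl⟩ := AdjoinRoot.mk_surjective y
    have hΦ : cyclotomic ℓ ℤ ∣ Q - C (p : ℤ) * Y := by
      rw [← AdjoinRoot.mk_eq_zero, map_sub, map_mul, hy, AdjoinRoot.mk_C]
      simp
    simpa using Polynomial.map_dvd (Int.castRingHom (ZMod p)) hΦ
  · rintro ⟨W, hW⟩
    obtain ⟨V, rfl⟩ := Polynomial.map_surjective _ (ZMod.ringHom_surjective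
      (Int.castRingHom (ZMod p))) W
    have hp : C (p : ℤ) ∣ Q - cyclotomic ℓ ℤ * V := by
      rw [C_dvd_iff_dvd_coeff]
      intro i
      rw [← ZMod.intCast_zmod_eq_zero_iff_dvd, ← eq_intCast (Int.castRingHom (ZMod p)),
        ← coeff_map, Polynomial.map_sub, Polynomial.map_mul, map_cyclotomic, hW, sub_self,
        coeff_zero]
    obtain ⟨G, hG⟩ := hp
    rw [map_natCast] at hG
    refine ⟨AdjoinRoot.mk _ G, ?_⟩
    rw [← map_natCast (AdjoinRoot.mk (cyclotomic ℓ ℤ)), ← map_mul, AdjoinRoot.mk_eq_mk,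
      show Q - (p : ℤ[X]) * G = cyclotomic ℓ ℤ * V by linear_combination hG]
    exact dvd_mul_right _ _

theorem natCast_dvd_of_dvd_pow {p : ℕ} [Fact p.Prime] (hpℓ : ¬ p ∣ ℓ) {x : CyclotomicIntegers ℓ}
    {N : ℕ} (hN : N ≠ 0) (h : (p : CyclotomicIntegers ℓ) ∣ x ^ N) :
    (p : CyclotomicIntegers ℓ) ∣ x := by
  obtain ⟨Q, rfl⟩ := AdjoinRoot.mk_surjective x
  have : NeZero (ℓ : ZMod p) := ⟨by rwa [Ne, ZMod.natCast_eq_zero_iff]⟩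
  rw [← map_pow, natCast_dvd_mk_iff, Polynomial.map_pow] at h
  exact (natCast_dvd_mk_iff Q).mpr (((squarefree_cyclotomic ℓ (ZMod p)).dvd_pow_iff_dvd hN).mp h)

variable [NeZero ℓ]

theorem natCast_dvd_intCast_iff {p : ℕ} [Fact p.Prime] (w : ℤ) :
    (p : CyclotomicIntegers ℓ) ∣ (w : CyclotomicIntegers ℓ) ↔ (p : ℤ) ∣ w := by
  refine ⟨fun h => ?_, fun h => by exact_mod_cast _root_.map_dvd (Int.castRingHom _) h⟩
  rw [← map_intCast (AdjoinRoot.mk (cyclotomic ℓ ℤ)) w, ← C_eq_intCast, Int.cast_id,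
    natCast_dvd_mk_iff, Polynomial.map_C, eq_intCast] at h
  by_contra hw
  rw [← ZMod.intCast_zmod_eq_zero_iff_dvd] at hw
  have := degree_le_of_dvd h (C_ne_zero.mpr hw)
  rw [degree_C hw] at this
  exact (degree_cyclotomic_pos ℓ (ZMod p) (NeZero.pos ℓ)).not_ge this

instance : CharZero (CyclotomicIntegers ℓ) :=
  charZero_of_injective_algebraMap (AdjoinRoot.of.injective_of_degree_ne_zero
    (degree_cyclotomic_pos ℓ ℤ (NeZero.pos ℓ)).ne')

theorem isPrimitiveRoot_zeta : IsPrimitiveRoot (zeta ℓ) ℓ := by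
  rw [← isRoot_cyclotomic_iff_charZero (NeZero.pos ℓ), ← map_cyclotomic ℓ (AdjoinRoot.of _)]
  exact AdjoinRoot.isRoot_root _

theorem zeta_pow_eq_one_of_dvd {n : ℕ} (h : ℓ ∣ n) : zeta ℓ ^ n = 1 :=
  (isPrimitiveRoot_zeta.pow_eq_one_iff_dvd n).mpr h

noncomputable def conj : CyclotomicIntegers ℓ →+* CyclotomicIntegers ℓ :=
  AdjoinRoot.lift (AdjoinRoot.of _) (zeta ℓ ^ (ℓ - 1)) (by
    rw [← eval_map, map_cyclotomic]
    refine IsPrimitiveRoot.isRoot_cyclotomic (NeZero.pos ℓ) ?_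
    exact isPrimitiveRoot_zeta.pow_of_coprime _
      ((Nat.coprime_self_sub_left (NeZero.one_le)).mpr (Nat.coprime_one_left ℓ)))

theorem conj_zeta_mul_zeta : conj (zeta ℓ) * zeta ℓ = 1 := by
  rw [conj, AdjoinRoot.lift_root, ← pow_succ, Nat.sub_add_cancel NeZero.one_le,
    isPrimitiveRoot_zeta.pow_eq_one]

theorem zeta_pow_eq_conj_zeta {q : ℕ} (hq : ℓ ∣ q + 1) : zeta ℓ ^ q = conj (zeta ℓ) := by
  refine mul_right_cancel₀ (isPrimitiveRoot_zeta.ne_zero (NeZero.ne ℓ)) ?_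
  rw [conj_zeta_mul_zeta, ← pow_succ, (isPrimitiveRoot_zeta.pow_eq_one_iff_dvd _).mpr hq]

theorem natCast_mem_nonunits (p : ℕ) [Fact p.Prime] :
    (p : CyclotomicIntegers ℓ) ∈ nonunits (CyclotomicIntegers ℓ) := fun hunit => by
  have h := (natCast_dvd_intCast_iff (ℓ := ℓ) (p := p) 1).mp (by simpa using hunit.dvd)
  exact (Fact.out : p.Prime).one_lt.ne' (by exact_mod_cast Int.eq_one_of_dvd_one (by positivity) h)

theorem natCast_dvd_conj_sub_pow {p : ℕ} [Fact p.Prime] {j : ℕ} (hj : ℓ ∣ p ^ j + 1)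
    (x : CyclotomicIntegers ℓ) : (p : CyclotomicIntegers ℓ) ∣ conj x - x ^ p ^ j := by
  let π := Ideal.Quotient.mk (Ideal.span {(p : CyclotomicIntegers ℓ)})
  have := CharP.quotient (CyclotomicIntegers ℓ) p (natCast_mem_nonunits p)
  have hfrob : π.comp conj = (iterateFrobenius _ p j).comp π :=
    AdjoinRoot.ringHom_ext (RingHom.ext_int _ _) (by
      simp [conj, iterateFrobenius_def, ← map_pow, zeta_pow_eq_conj_zeta hj])
  rw [← Ideal.mem_span_singleton, ← Ideal.Quotient.eq_zero_iff_mem, map_sub, map_pow,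
    sub_eq_zero]
  exact RingHom.congr_fun hfrob x

theorem natCast_dvd_of_dvd_mul_conj {p : ℕ} [Fact p.Prime] {j : ℕ} (hj0 : j ≠ 0)
    (hj : ℓ ∣ p ^ j + 1) {x : CyclotomicIntegers ℓ}
    (h : (p : CyclotomicIntegers ℓ) ∣ x * conj x) : (p : CyclotomicIntegers ℓ) ∣ x := by
  have hpℓ : ¬ p ∣ ℓ := fun hpℓ => (Fact.out : p.Prime).one_lt.ne'
    (Nat.dvd_one.mp ((Nat.dvd_add_right (dvd_pow_self p hj0)).mp (hpℓ.trans hj)))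
  refine natCast_dvd_of_dvd_pow hpℓ (N := p ^ j + 1) (by omega) ?_
  rw [show x ^ (p ^ j + 1) = x * conj x - x * (conj x - x ^ p ^ j) by ring]
  exact dvd_sub h (dvd_mul_of_dvd_right (natCast_dvd_conj_sub_pow hj x) x)

theorem mul_conj_ne_natCast {p : ℕ} [Fact p.Prime] (hp : Semiprimitive p ℓ) {m : ℕ}
    (hm : m ≠ 0) (hodd : Odd (padicValNat p m)) (x : CyclotomicIntegers ℓ) :
    x * conj x ≠ m := by
  obtain ⟨j, hj0, hj⟩ := hp
  have hj' : ℓ ∣ p ^ j + 1 := by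
    rw [← Int.natCast_dvd_natCast,
      show ((p ^ j + 1 : ℕ) : ℤ) = -(-1 - (p : ℤ) ^ j) by push_cast; ring]
    exact hj.dvd.neg_right
  intro h
  refine Nat.not_even_iff_odd.mpr hodd (even_of_mul_map_eq_pow_mul conj
    (Nat.cast_ne_zero.mpr (Fact.out : p.Prime).ne_zero) (map_natCast conj p)
    (fun _ => natCast_dvd_of_dvd_mul_conj hj0.ne' hj') (w := ((m / p ^ padicValNat p m : ℕ) : ℤ))
    ?_ (h.trans ?_))
  · rw [natCast_dvd_intCast_iff, ← Nat.factorization_def m Fact.out]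
    exact_mod_cast Nat.not_dvd_ordCompl (Fact.out : p.Prime) hm
  · rw [Int.cast_natCast, ← Nat.cast_pow, ← Nat.cast_mul, ← Nat.factorization_def m Fact.out,
      Nat.ordProj_mul_ordCompl_eq_self]

variable {n : ℕ} [NeZero n]

theorem conj_zmodChar (h : ℓ ∣ n) (a : ZMod n) :
    conj (AddChar.zmodChar n (zeta_pow_eq_one_of_dvd h) a) =
      AddChar.zmodChar n (zeta_pow_eq_one_of_dvd h) (-a) := by
  set ψ := AddChar.zmodChar n (zeta_pow_eq_one_of_dvd h)
  have hψ : ψ (-a) * ψ a = 1 := by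
    rw [← AddChar.map_add_eq_mul, neg_add_cancel, AddChar.map_zero_eq_one]
  refine mul_right_cancel₀ (left_ne_zero_of_mul_eq_one (mul_comm (ψ (-a)) _ ▸ hψ)) ?_
  rw [hψ, AddChar.zmodChar_apply, map_pow, ← mul_pow, conj_zeta_mul_zeta, one_pow]

theorem zmodChar_ne_one (hℓ : 1 < ℓ) (h : ℓ ∣ n) :
    AddChar.zmodChar n (zeta_pow_eq_one_of_dvd h) ≠ 1 := by
  rw [AddChar.ne_one_iff]
  refine ⟨1, ?_⟩
  rw [← Nat.cast_one, AddChar.zmodChar_apply', pow_one]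
  exact isPrimitiveRoot_zeta.ne_one hℓ

theorem not_isCDS (hℓ : 1 < ℓ) (h : ℓ ∣ n) {p : ℕ} [Fact p.Prime] (hp : Semiprimitive p ℓ)
    {k lam : ℕ} (hlt : lam < k) (hodd : Odd (padicValNat p (k - lam))) (D : Finset (ZMod n)) :
    ¬ IsCDS n k lam D := by
  rintro ⟨hk, hlam⟩
  set ψ := AddChar.zmodChar n (zeta_pow_eq_one_of_dvd h)
  have hD := AddChar.sum_mul_sum_neg_eq_sub (zmodChar_ne_one hℓ h) hk hlam
  simp_rw [← conj_zmodChar h, ← map_sum, ← Nat.cast_sub hlt.le] at hD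
  exact mul_conj_ne_natCast hp (Nat.sub_ne_zero_of_lt hlt) hodd _ hD

end CyclotomicIntegers

theorem semiprimitive_five {p : ℕ} (hp : p % 5 = 2 ∨ p % 5 = 3 ∨ p % 5 = 4) :
    Semiprimitive p 5 := by
  have key : ∀ c, p ^ c % 5 = 4 → Semiprimitive p 5 := fun c hc =>
    ⟨c, Nat.pos_of_ne_zero (by rintro rfl; rw [pow_zero] at hc; omega), by
      rw [Int.ModEq, ← Nat.cast_pow]; omega⟩
  rcases hp with h | h | h
  · exact key 2 (by rw [Nat.pow_mod, h])
  · exact key 2 (by rw [Nat.pow_mod, h])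
  · exact key 1 (by rw [pow_one, h])

theorem five_dvd_sq_add_one_div_two {u : ℕ} (hu : u % 10 = 3 ∨ u % 10 = 7) :
    5 ∣ (u ^ 2 + 1) / 2 := by
  have : u ^ 2 % 10 = 9 := by rcases hu with h | h <;> rw [Nat.pow_mod, h]
  omega

theorem odd_padicValNat_mul {p a b : ℕ} [Fact p.Prime] (ha : a ≠ 0) (hb : b ≠ 0)
    (hab : ¬ (p ∣ a ∧ p ∣ b)) (h : Odd (padicValNat p a) ∨ Odd (padicValNat p b)) :
    Odd (padicValNat p (a * b)) := by
  rw [padicValNat.mul ha hb]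
  rcases h with h | h
  · rw [padicValNat.eq_zero_of_not_dvd fun hb' => hab ⟨dvd_of_one_le_padicValNat h.pos, hb'⟩,
      add_zero]
    exact h
  · rw [padicValNat.eq_zero_of_not_dvd fun ha' => hab ⟨ha', dvd_of_one_le_padicValNat h.pos⟩,
      zero_add]
    exact h

theorem exists_prime_odd_padicValNat {u m : ℕ} (hm0 : m ≠ 0) (hm : 8 * m = (u + 1) * (u - 1))
    (h : Even (padicValNat 2 (u ^ 2 - 1)) ∨
      ∃ p : ℕ, p.Prime ∧ Odd p ∧ (p % 5 = 2 ∨ p % 5 = 3 ∨ p % 5 = 4) ∧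
        (Odd (padicValNat p (u + 1)) ∨ Odd (padicValNat p (u - 1)))) :
    ∃ p : ℕ, p.Prime ∧ (p % 5 = 2 ∨ p % 5 = 3 ∨ p % 5 = 4) ∧ Odd (padicValNat p m) := by
  rcases h with h | ⟨p, hp, hpodd, hp5, hodd⟩
  · refine ⟨2, Nat.prime_two, Or.inl rfl, ?_⟩
    rw [show u ^ 2 - 1 = 2 ^ 3 * m by rw [← one_pow 2, Nat.sq_sub_sq, ← hm]; rfl,
      padicValNat.mul (by norm_num) hm0, padicValNat.prime_pow] at h
    rw [Nat.even_iff] at h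
    exact Nat.odd_iff.mpr (by omega)
  · have := Fact.mk hp
    have hp2 : ¬ p ∣ 2 := fun h2 => by
      rw [Nat.prime_dvd_prime_iff_eq hp Nat.prime_two] at h2
      exact Nat.not_even_iff_odd.mpr hpodd (h2 ▸ even_two)
    have hu : u - 1 ≠ 0 := by rintro h0; rw [h0, mul_zero] at hm; omega
    refine ⟨p, hp, hp5, ?_⟩
    have h8 := odd_padicValNat_mul (p := p) (by omega) hu
      (fun ⟨h1, h2⟩ => hp2 (by simpa [show u + 1 - (u - 1) = 2 by omega] using Nat.dvd_sub h1 h2))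
      hodd
    rwa [← hm, padicValNat.mul (by norm_num) hm0, padicValNat.eq_zero_of_not_dvd
      (show ¬ p ∣ 8 from fun h8 => hp2 (hp.dvd_of_dvd_pow (n := 3) h8)), zero_add] at h8

theorem cds_params_of_odd {u : ℕ} (hu : Odd u) (hu3 : 3 ≤ u) :
    2 * (((u ^ 2 + 1) / 2 : ℕ) : ℤ) = (u : ℤ) ^ 2 + 1 ∧
      4 * (((u - 1) ^ 2 / 4 : ℕ) : ℤ) = ((u : ℤ) - 1) ^ 2 ∧
      8 * (((u - 1) * (u - 3) / 8 : ℕ) : ℤ) = ((u : ℤ) - 1) * ((u : ℤ) - 3) := by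
  have d2 : 2 ∣ u ^ 2 + 1 := even_iff_two_dvd.mp hu.pow.add_one
  have d4 : 4 ∣ (u - 1) ^ 2 :=
    pow_dvd_pow_of_dvd (even_iff_two_dvd.mp (Nat.Odd.sub_odd hu odd_one)) 2
  have d8 : 8 ∣ (u - 1) * (u - 3) := by
    have hodd : Odd (u - 2) := by rcases hu with ⟨r, rfl⟩; exact ⟨r - 1, by omega⟩
    have := Nat.eight_dvd_sq_sub_one_of_odd hodd
    rwa [← one_pow 2, Nat.sq_sub_sq, show u - 2 + 1 = u - 1 by omega,
      show u - 2 - 1 = u - 3 by omega] at this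
  refine ⟨?_, ?_, ?_⟩
  · rw [← Nat.cast_two (R := ℤ), ← Nat.cast_mul, Nat.mul_div_cancel' d2]; push_cast; ring
  · rw [← Nat.cast_ofNat (R := ℤ) (n := 4), ← Nat.cast_mul, Nat.mul_div_cancel' d4]
    push_cast [Nat.cast_sub (by omega : 1 ≤ u)]; ring
  · rw [← Nat.cast_ofNat (R := ℤ) (n := 8), ← Nat.cast_mul, Nat.mul_div_cancel' d8]
    push_cast [Nat.cast_sub (by omega : 1 ≤ u), Nat.cast_sub hu3]; ring

theorem stmt1_general (u : ℕ) (hmod : u % 10 = 3 ∨ u % 10 = 7)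
    (h : Even (padicValNat 2 (u ^ 2 - 1)) ∨
      ∃ p : ℕ, p.Prime ∧ Odd p ∧ (p % 5 = 2 ∨ p % 5 = 3 ∨ p % 5 = 4) ∧
        (Odd (padicValNat p (u + 1)) ∨ Odd (padicValNat p (u - 1)))) :
    (¬ ∃ D : Finset (ZMod ((u ^ 2 + 1) / 2)),
        IsCDS ((u ^ 2 + 1) / 2) ((u - 1) ^ 2 / 4) ((u - 1) * (u - 3) / 8) D) ∧
    ¬ ∃ a : ℤ → ℤ, IsBinarySeq ((u ^ 2 + 1) / 2) a ∧
        HasConstAutocorr ((u ^ 2 + 1) / 2) a 1 := by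
  have hu3 : 3 ≤ u := by omega
  have h5 := five_dvd_sq_add_one_div_two hmod
  obtain ⟨hn, hk, hlam⟩ := cds_params_of_odd (Nat.odd_iff.mpr (by omega)) hu3
  generalize (u ^ 2 + 1) / 2 = n at *
  generalize (u - 1) ^ 2 / 4 = k at *
  generalize (u - 1) * (u - 3) / 8 = lam at *
  have : NeZero n := ⟨by rintro rfl; push_cast at hn; nlinarith⟩
  have hlt : lam < k := by
    have : (3 : ℤ) ≤ u := by exact_mod_cast hu3
    have : (lam : ℤ) < k := by linarith
    exact_mod_cast this
  have hm : 8 * (k - lam) = (u + 1) * (u - 1) := by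
    zify [hlt.le, (by omega : 1 ≤ u)]
    linear_combination 2 * hk - hlam
  obtain ⟨p, hp, hp5, hodd⟩ := exists_prime_odd_padicValNat (Nat.sub_ne_zero_of_lt hlt) hm h
  have := Fact.mk hp
  have hcds := CyclotomicIntegers.not_isCDS (by norm_num) h5 (semiprimitive_five hp5) hlt hodd
  refine ⟨fun ⟨D, hD⟩ => hcds D hD, ?_⟩
  rintro ⟨a, ha, hC⟩
  obtain ⟨D, hD, hDg⟩ :=
    exists_difference_counts_of_hasConstAutocorr_one ha hC (u := u) (by linear_combination -hn)
  refine hcds D ⟨?_, fun g hg => ?_⟩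
  · have : (D.card : ℤ) = k := by linarith
    exact_mod_cast this
  · have : (((D ×ˢ D).filter (fun q => q.1 - q.2 = g)).card : ℤ) = lam := by
      linarith [hDg g hg]
    exact_mod_cast this

theorem stmt1 (u : ℕ) (hu : 3 ≤ u) (hmod : u % 10 = 3 ∨ u % 10 = 7)
    (h : Even (padicValNat 2 (u ^ 2 - 1)) ∨
      ∃ p : ℕ, p.Prime ∧ Odd p ∧ (p % 5 = 2 ∨ p % 5 = 3 ∨ p % 5 = 4) ∧
        (Odd (padicValNat p (u + 1)) ∨ Odd (padicValNat p (u - 1)))) :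
    (¬ ∃ D : Finset (ZMod ((u ^ 2 + 1) / 2)),
        IsCDS ((u ^ 2 + 1) / 2) ((u - 1) ^ 2 / 4) ((u - 1) * (u - 3) / 8) D) ∧
    ¬ ∃ a : ℤ → ℤ, IsBinarySeq ((u ^ 2 + 1) / 2) a ∧
        HasConstAutocorr ((u ^ 2 + 1) / 2) a 1 :=
  stmt1_general u hmod h
end

section
/- Let u be a positive integer with u ≡ 3 (mod 10) or u ≡ 7 (mod 10). Then v_2(u²-1) is even if and only if there exist an integer l ≥ 1 and a sign ε ∈ {1,-1} such that u ≡ ε·(2^{2l+1}+(-1)^l) (mod 5·2^{2l+2}) or u ≡ ε·(3·2^{2l+1}+(-1)^l) (mod 5·2^{2l+2}). -/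
/-!
Pick `δ = ±1` with `u ≡ δ (mod 4)`. Then `u + δ` is twice an odd number, so
`v₂(u² - 1) = v₂(u - δ) + 1`, and `v₂(x) = k` exactly when `x ≡ 2ᵏ (mod 2ᵏ⁺¹)`.
By the Chinese remainder theorem the congruence modulo `5 · 2^(2l+2)` splits in two: modulo
`2^(2l+2)` it says `u - ε(-1)ˡ ≡ 2^(2l+1)`, i.e. `v₂(u² - 1) = 2l + 2`; modulo `5`, since
`2^(2l+1) ≡ 2(-1)ˡ`, it says `u ≡ ε(-1)ˡ(2c + 1)`, which for `u ≡ ±2 (mod 5)` holds for one of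
`c = 1, 3`.
-/

namespace Int

lemma modEq_two_pow_iff {x : ℤ} {k : ℕ} :
    x ≡ 2 ^ k [ZMOD 2 ^ (k + 1)] ↔ 2 ^ k ∣ x ∧ ¬ 2 ^ (k + 1) ∣ x := by
  have hpow : (2 : ℤ) ^ (k + 1) = 2 ^ k * 2 := pow_succ 2 k
  have hk : (2 : ℤ) ^ k ≠ 0 := by positivity
  rw [modEq_comm, modEq_iff_dvd, hpow]
  constructor
  · rintro ⟨t, ht⟩
    refine ⟨⟨2 * t + 1, by linear_combination ht⟩, ?_⟩
    rintro ⟨w, hw⟩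
    have := mul_left_cancel₀ hk (show (2 : ℤ) ^ k * 1 = 2 ^ k * (2 * (w - t)) by
      linear_combination hw - ht)
    omega
  · rintro ⟨⟨m, rfl⟩, hm⟩
    rw [mul_dvd_mul_iff_left hk] at hm
    obtain ⟨t, rfl⟩ : ∃ t, m = 2 * t + 1 := ⟨m / 2, by omega⟩
    exact ⟨t, by ring⟩

lemma padicValInt_two_eq_iff_modEq {x : ℤ} (hx : x ≠ 0) {k : ℕ} :
    padicValInt 2 x = k ↔ x ≡ 2 ^ k [ZMOD 2 ^ (k + 1)] := by
  have := Fact.mk Nat.prime_two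
  have hdvd (n : ℕ) : (2 : ℤ) ^ n ∣ x ↔ n ≤ padicValInt 2 x := by
    simpa [hx] using padicValInt_dvd_iff (p := 2) n x
  rw [modEq_two_pow_iff, hdvd, hdvd]
  omega

lemma ne_zero_of_modEq_two_pow {x : ℤ} {k : ℕ} (h : x ≡ 2 ^ k [ZMOD 2 ^ (k + 1)]) : x ≠ 0 := by
  rintro rfl
  exact (modEq_two_pow_iff.mp h).2 (dvd_zero _)

end Int

open Int

lemma padicValInt_two_sq_sub_one {u δ : ℤ} (hδ : δ = 1 ∨ δ = -1) {k : ℕ} (hk : 2 ≤ k)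
    (h : u - δ ≡ 2 ^ k [ZMOD 2 ^ (k + 1)]) : padicValInt 2 (u ^ 2 - 1) = k + 1 := by
  have := Fact.mk Nat.prime_two
  have h4 : 4 ∣ u - δ :=
    (pow_dvd_pow (2 : ℤ) hk).trans (modEq_two_pow_iff.mp h).1
  -- `u + δ = (u - δ) + 2δ` with `4 ∣ u - δ`, so `u + δ` is twice an odd number
  have hplus : u + δ ≡ 2 ^ 1 [ZMOD 2 ^ (1 + 1)] := by
    rw [modEq_iff_dvd]; rcases hδ with rfl | rfl <;> omega
  have hfactor : u ^ 2 - 1 = (u - δ) * (u + δ) := by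
    rcases hδ with rfl | rfl <;> ring
  rw [hfactor, padicValInt.mul (ne_zero_of_modEq_two_pow h) (ne_zero_of_modEq_two_pow hplus),
    (padicValInt_two_eq_iff_modEq (ne_zero_of_modEq_two_pow h)).mpr h,
    (padicValInt_two_eq_iff_modEq (ne_zero_of_modEq_two_pow hplus)).mpr hplus]

lemma exists_sub_modEq_two_pow_of_odd {u : ℤ} (hu : Odd u) (hu₁ : u ≠ 1) (hu₂ : u ≠ -1) :
    ∃ δ : ℤ, (δ = 1 ∨ δ = -1) ∧ ∃ k : ℕ, 2 ≤ k ∧ u - δ ≡ 2 ^ k [ZMOD 2 ^ (k + 1)] := by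
  have := Fact.mk Nat.prime_two
  obtain ⟨δ, hδ, h4⟩ : ∃ δ : ℤ, (δ = 1 ∨ δ = -1) ∧ (2 : ℤ) ^ 2 ∣ u - δ := by
    obtain ⟨t, rfl⟩ := hu
    rcases Int.emod_two_eq t with ht | ht
    · exact ⟨1, .inl rfl, ⟨t / 2, by omega⟩⟩
    · exact ⟨-1, .inr rfl, ⟨t / 2 + 1, by omega⟩⟩
  have hne : u - δ ≠ 0 := by rcases hδ with rfl | rfl <;> omega
  refine ⟨δ, hδ, padicValInt 2 (u - δ), ?_, (padicValInt_two_eq_iff_modEq hne).mp rfl⟩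
  simpa [hne] using (padicValInt_dvd_iff (p := 2) 2 (u - δ)).mp h4

lemma two_pow_two_mul_add_one_modEq_five (l : ℕ) : 2 ^ (2 * l + 1) ≡ 2 * (-1) ^ l [ZMOD 5] := by
  rw [pow_succ, pow_mul, mul_comm]
  exact (Int.ModEq.pow l (by decide : (2 : ℤ) ^ 2 ≡ -1 [ZMOD 5])).mul_left 2

lemma modEq_five_mul_two_pow_iff {u ε c : ℤ} (hε : ε = 1 ∨ ε = -1) (hc : Odd c) (l : ℕ) :
    u ≡ ε * (c * 2 ^ (2 * l + 1) + (-1) ^ l) [ZMOD 5 * 2 ^ (2 * l + 2)] ↔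
      u ≡ ε * (-1) ^ l * (2 * c + 1) [ZMOD 5] ∧
        u - ε * (-1) ^ l ≡ 2 ^ (2 * l + 1) [ZMOD 2 ^ (2 * l + 2)] := by
  have hcop : (5 : ℤ).natAbs.Coprime ((2 : ℤ) ^ (2 * l + 2)).natAbs := by
    rw [Int.natAbs_pow]; exact Nat.Coprime.pow_right _ (by norm_num)
  rw [← modEq_and_modEq_iff_modEq_mul hcop]
  apply and_congr
  · have h5 : ε * (c * 2 ^ (2 * l + 1) + (-1) ^ l) ≡ ε * (-1) ^ l * (2 * c + 1) [ZMOD 5] := by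
      have := (((two_pow_two_mul_add_one_modEq_five l).mul_left c).add_right ((-1) ^ l)).mul_left ε
      rwa [show ε * (c * (2 * (-1) ^ l) + (-1) ^ l) = ε * (-1) ^ l * (2 * c + 1) by ring] at this
    exact ⟨fun h => h.trans h5, fun h => h.trans h5.symm⟩
  · obtain ⟨t, hεc⟩ : Odd (ε * c) := by rcases hε with rfl | rfl <;> simp [hc]
    rw [modEq_iff_dvd, modEq_iff_dvd]
    -- the two differences differ by `(ε c - 1) 2 ^ (2l+1)`, a multiple of `2 ^ (2l+2)`
    have : ε * (c * 2 ^ (2 * l + 1) + (-1) ^ l) - u =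
        (2 ^ (2 * l + 1) - (u - ε * (-1) ^ l)) + 2 ^ (2 * l + 2) * t := by
      linear_combination 2 ^ (2 * l + 1) * hεc
    rw [this, dvd_add_left (dvd_mul_right _ _)]

lemma mul_neg_one_pow_eq_one_or {ε : ℤ} (hε : ε = 1 ∨ ε = -1) (l : ℕ) :
    ε * (-1) ^ l = 1 ∨ ε * (-1) ^ l = -1 :=
  Int.isUnit_iff.mp ((Int.isUnit_iff.mpr hε).mul (isUnit_neg_one.pow l))

lemma exists_modEq_five_sign_mul {u δ : ℤ} (hu : u % 5 = 2 ∨ u % 5 = 3) (hδ : δ = 1 ∨ δ = -1) :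
    ∃ c : ℤ, (c = 1 ∨ c = 3) ∧ u ≡ δ * (2 * c + 1) [ZMOD 5] := by
  simp only [modEq_iff_dvd]
  rcases hδ with rfl | rfl <;> rcases hu with hu | hu
  exacts [⟨3, .inr rfl, by omega⟩, ⟨1, .inl rfl, by omega⟩,
    ⟨1, .inl rfl, by omega⟩, ⟨3, .inr rfl, by omega⟩]

theorem stmt2_general (u : ℤ) (hmod : u % 10 = 3 ∨ u % 10 = 7) :
    Even (padicValInt 2 (u ^ 2 - 1)) ↔
      ∃ l : ℕ, 1 ≤ l ∧ ∃ ε : ℤ, (ε = 1 ∨ ε = -1) ∧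
        (Int.ModEq (5 * 2 ^ (2 * l + 2)) u (ε * (2 ^ (2 * l + 1) + (-1) ^ l)) ∨
         Int.ModEq (5 * 2 ^ (2 * l + 2)) u (ε * (3 * 2 ^ (2 * l + 1) + (-1) ^ l))) := by
  constructor
  · intro hEven
    obtain ⟨δ, hδ, k, hk, hu⟩ :=
      exists_sub_modEq_two_pow_of_odd (u := u) (Int.odd_iff.mpr (by omega)) (by omega) (by omega)
    rw [padicValInt_two_sq_sub_one hδ hk hu] at hEven
    obtain ⟨l, rfl⟩ : ∃ l, k = 2 * l + 1 := ⟨k / 2, by obtain ⟨m, hm⟩ := hEven; omega⟩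
    obtain ⟨c, hc, h5⟩ := exists_modEq_five_sign_mul (u := u) (by omega) hδ
    have hsign : δ * (-1) ^ l * (-1) ^ l = δ := by rw [mul_assoc, ← mul_pow]; simp
    have hu' := (modEq_five_mul_two_pow_iff (u := u) (c := c) (mul_neg_one_pow_eq_one_or hδ l)
      (by rcases hc with rfl | rfl <;> decide) l).mpr ⟨by rwa [hsign], by rwa [hsign]⟩
    refine ⟨l, by omega, δ * (-1) ^ l, mul_neg_one_pow_eq_one_or hδ l, ?_⟩
    rcases hc with rfl | rfl
    · exact .inl (by rwa [one_mul] at hu')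
    · exact .inr hu'
  · rintro ⟨l, hl, ε, hε, hu⟩
    have hu' : u - ε * (-1) ^ l ≡ 2 ^ (2 * l + 1) [ZMOD 2 ^ (2 * l + 1 + 1)] := by
      rcases hu with hu | hu
      · exact ((modEq_five_mul_two_pow_iff hε odd_one l).mp (by rwa [one_mul])).2
      · exact ((modEq_five_mul_two_pow_iff hε (by decide) l).mp hu).2
    rw [padicValInt_two_sq_sub_one (mul_neg_one_pow_eq_one_or hε l) (by omega) hu']
    exact ⟨l + 1, by ring⟩

theorem stmt2 (u : ℤ) (hu : 0 < u) (hmod : u % 10 = 3 ∨ u % 10 = 7) :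
    Even (padicValInt 2 (u ^ 2 - 1)) ↔
      ∃ l : ℕ, 1 ≤ l ∧ ∃ ε : ℤ, (ε = 1 ∨ ε = -1) ∧
        (Int.ModEq (5 * 2 ^ (2 * l + 2)) u (ε * (2 ^ (2 * l + 1) + (-1) ^ l)) ∨
         Int.ModEq (5 * 2 ^ (2 * l + 2)) u (ε * (3 * 2 ^ (2 * l + 1) + (-1) ^ l))) :=
  stmt2_general u hmod
end

section
/- Let u ≥ 3 be an integer with u ≡ 7, 13, 23, 43, 47, 67, 77, or 83 (mod 90). Then there is no binary sequence of period (u²+1)/2 with all nontrivial autocorrelation values equal to 1. -/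
/-! Let `n = (u² + 1)/2`; the congruences on `u` give `5 ∣ n` and `n ≡ 4, 7 (mod 9)`. Folding the
sequence modulo `5` yields `b : ℤ/5 → ℤ` whose periodic correlations are `n/5 + n - 1` at `0` and
`n/5` elsewhere, so `B = ∑ b r ζ^r` satisfies `B B̄ = n - 1` in `ℤ[ζ₅]`. Since `3` is inert in
`ℤ[ζ₅]` (it has order `4` modulo `5`), a norm of this shape divisible by `3` is divisible by `9`,
whereas `n - 1 ≡ 3, 6 (mod 9)`. -/

open Finset

theorem Function.Periodic.sum_range_comp_add {M : Type*} [AddCancelCommMonoid M] {f : ℤ → M}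
    {n : ℕ} (hf : Function.Periodic f n) (i : ℕ) :
    ∑ t ∈ range n, f (i + t) = ∑ t ∈ range n, f t := by
  induction i with
  | zero => simp
  | succ k ih =>
    rw [← ih]
    have h := (sum_range_succ' (fun t => f (k + t)) n).symm.trans (sum_range_succ _ n)
    rw [Nat.cast_zero, add_zero, hf] at h
    rw [← add_right_cancel h]
    exact sum_congr rfl fun t _ => by push_cast; ring_nf

theorem card_filter_range_natCast_eq_of_dvd {n k : ℕ} [NeZero k] (hk : k ∣ n) (d : ZMod k) :
    #{t ∈ range n | ((t : ℕ) : ZMod k) = d} = n / k := by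
  have h := Nat.count_modEq_card n (Nat.pos_of_neZero k) d.val
  rw [Nat.count_eq_card_filter_range, Nat.mod_eq_zero_of_dvd hk] at h
  simp only [Nat.not_lt_zero, if_false, add_zero] at h
  rw [← h]
  refine congrArg card (filter_congr fun t _ => ?_)
  rw [← ZMod.natCast_eq_natCast_iff, ZMod.natCast_zmod_val]

/-- The image of one period of `a` in the group ring `ℤ[ℤ/k]`. -/
def modProj (n k : ℕ) (a : ℤ → ℤ) (r : ZMod k) : ℤ :=
  ∑ i ∈ range n with ((i : ℕ) : ZMod k) = r, a i

def cyclicCorr {k : ℕ} [NeZero k] (b : ZMod k → ℤ) (d : ZMod k) : ℤ :=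
  ∑ r, b (r + d) * b r

theorem sum_filter_natCast_eq_comp_add {n k : ℕ} (hk : k ∣ n) {a : ℤ → ℤ}
    (ha : Function.Periodic a n) (i : ℕ) (d : ZMod k) :
    ∑ t ∈ range n with ((t : ℕ) : ZMod k) = d, a (i + t) = modProj n k a (i + d) := by
  set g : ℤ → ℤ := fun x => if (x : ZMod k) = i + d then a x else 0
  have hg : Function.Periodic g n := fun x => by
    simp only [g, ha x, Int.cast_add, Int.cast_natCast, (ZMod.natCast_eq_zero_iff n k).mpr hk,
      add_zero]
  calc ∑ t ∈ range n with ((t : ℕ) : ZMod k) = d, a (i + t)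
      = ∑ t ∈ range n, g (i + t) := by
        rw [sum_filter]
        refine sum_congr rfl fun t _ => ?_
        simp only [g, Int.cast_add, Int.cast_natCast, add_right_inj]
    _ = ∑ t ∈ range n, g t := hg.sum_range_comp_add i
    _ = modProj n k a (i + d) := by
        rw [modProj, sum_filter]
        simp [g]

theorem cyclicCorr_modProj {n k : ℕ} [NeZero k] (hk : k ∣ n) {a : ℤ → ℤ}
    (ha : Function.Periodic a n) (d : ZMod k) :
    cyclicCorr (modProj n k a) d = ∑ t ∈ range n with ((t : ℕ) : ZMod k) = d, autocorr n a t := by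
  calc cyclicCorr (modProj n k a) d
      = ∑ r, ∑ i ∈ range n with ((i : ℕ) : ZMod k) = r, a i * modProj n k a (i + d) := by
        refine sum_congr rfl fun r _ => ?_
        rw [mul_comm, modProj, sum_mul]
        refine sum_congr rfl fun i hi => ?_
        rw [(mem_filter.mp hi).2]
    _ = ∑ i ∈ range n, a i * modProj n k a (i + d) := sum_fiberwise _ _ _
    _ = ∑ t ∈ range n with ((t : ℕ) : ZMod k) = d, autocorr n a t := by
        simp_rw [autocorr, sum_comm (s := filter _ _), ← mul_sum,
          sum_filter_natCast_eq_comp_add hk ha]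

theorem autocorr_zero {n : ℕ} {a : ℤ → ℤ} (ha : IsBinarySeq n a) : autocorr n a 0 = n := by
  have hsq (i : ℤ) : a i * a i = 1 := by rcases ha.1 i with h | h <;> simp [h]
  simp [autocorr, hsq]

theorem sum_autocorr_of_subset_range {n : ℕ} {a : ℤ → ℤ} (ha : IsBinarySeq n a)
    (hac : HasConstAutocorr n a 1) {s : Finset ℕ} (hs : s ⊆ range n) :
    ∑ t ∈ s, autocorr n a t = #s + if 0 ∈ s then (n : ℤ) - 1 else 0 := by
  have hval : ∀ t ∈ s, autocorr n a t = 1 + if t = 0 then (n : ℤ) - 1 else 0 := by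
    intro t ht
    have htn := mem_range.mp (hs ht)
    split_ifs with h0
    · simp [h0, autocorr_zero ha]
    · simpa using hac t (by omega) (by omega)
  rw [sum_congr rfl hval, sum_add_distrib, sum_ite_eq']
  simp

theorem cyclicCorr_modProj_of_hasConstAutocorr {n k : ℕ} [NeZero k] (hk : k ∣ n) (hn : 0 < n)
    {a : ℤ → ℤ} (ha : IsBinarySeq n a) (hac : HasConstAutocorr n a 1) (d : ZMod k) :
    cyclicCorr (modProj n k a) d = (n / k : ℕ) + if d = 0 then (n : ℤ) - 1 else 0 := by
  rw [cyclicCorr_modProj hk ha.2, sum_autocorr_of_subset_range ha hac (filter_subset _ _),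
    card_filter_range_natCast_eq_of_dvd hk]
  simp [hn, eq_comm]

theorem nine_dvd_of_three_dvd_cyclicCorr (b : ZMod 5 → ℤ)
    (h12 : cyclicCorr b 1 = cyclicCorr b 2) (h3 : 3 ∣ cyclicCorr b 0 - cyclicCorr b 1) :
    9 ∣ cyclicCorr b 0 - cyclicCorr b 1 := by
  -- translating `b` by `b 0` changes no difference of correlations, so `b 0 = 0` may be assumed
  have key : ∀ c1 c2 c3 c4 : ZMod 9,
      c1*c2 + c2*c3 + c3*c4 = c1*c3 + c2*c4 + c4*c1 →
      3 * (c1^2 + c2^2 + c3^2 + c4^2 - (c1*c2 + c2*c3 + c3*c4)) = 0 →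
      c1^2 + c2^2 + c3^2 + c4^2 - (c1*c2 + c2*c3 + c3*c4) = 0 := by
    decide
  have e0 : cyclicCorr b 0 = b 0 * b 0 + b 1 * b 1 + b 2 * b 2 + b 3 * b 3 + b 4 * b 4 :=
    Fin.sum_univ_five _
  have e1 : cyclicCorr b 1 = b 1 * b 0 + b 2 * b 1 + b 3 * b 2 + b 4 * b 3 + b 0 * b 4 :=
    Fin.sum_univ_five _
  have e2 : cyclicCorr b 2 = b 2 * b 0 + b 3 * b 1 + b 4 * b 2 + b 0 * b 3 + b 1 * b 4 :=
    Fin.sum_univ_five _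
  obtain ⟨y, hy⟩ := h3
  apply (ZMod.intCast_zmod_eq_zero_iff_dvd _ 9).mp
  have h9 : ((9 : ℤ) : ZMod 9) = 0 := by decide
  have H12 := congrArg (Int.cast : ℤ → ZMod 9) h12
  have H3 := congrArg (Int.cast : ℤ → ZMod 9) hy
  push_cast [e0, e1, e2] at H12 H3 h9 ⊢
  have := key (b 1 - b 0) (b 2 - b 0) (b 3 - b 0) (b 4 - b 0) (by linear_combination H12)
    (by linear_combination 3 * H3 + y * h9)
  linear_combination this

theorem sq_add_one_div_two_mod_forty_five {u : ℕ}
    (hmod : u % 90 = 7 ∨ u % 90 = 13 ∨ u % 90 = 23 ∨ u % 90 = 43 ∨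
            u % 90 = 47 ∨ u % 90 = 67 ∨ u % 90 = 77 ∨ u % 90 = 83) :
    (u ^ 2 + 1) / 2 % 45 = 25 ∨ (u ^ 2 + 1) / 2 % 45 = 40 := by
  have hsq : u ^ 2 % 90 = (u % 90) ^ 2 % 90 := Nat.pow_mod u 2 90
  rcases hmod with h | h | h | h | h | h | h | h <;> rw [h] at hsq <;> omega

theorem stmt5_general (u : ℕ)
    (hmod : u % 90 = 7 ∨ u % 90 = 13 ∨ u % 90 = 23 ∨ u % 90 = 43 ∨
            u % 90 = 47 ∨ u % 90 = 67 ∨ u % 90 = 77 ∨ u % 90 = 83) :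
    ¬ ∃ a : ℤ → ℤ, IsBinarySeq ((u ^ 2 + 1) / 2) a ∧
        HasConstAutocorr ((u ^ 2 + 1) / 2) a 1 := by
  rintro ⟨a, ha, hac⟩
  set n := (u ^ 2 + 1) / 2
  have hn := sq_add_one_div_two_mod_forty_five hmod
  have h5 : 5 ∣ n := by omega
  have hcorr := cyclicCorr_modProj_of_hasConstAutocorr h5 (by omega) ha hac
  have h0 : cyclicCorr (modProj n 5 a) 0 = (n / 5 : ℕ) + ((n : ℤ) - 1) := by
    rw [hcorr, if_pos rfl]
  have h1 : cyclicCorr (modProj n 5 a) 1 = (n / 5 : ℕ) := by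
    rw [hcorr, if_neg (by decide), add_zero]
  have h2 : cyclicCorr (modProj n 5 a) 2 = (n / 5 : ℕ) := by
    rw [hcorr, if_neg (by decide), add_zero]
  have h9 := nine_dvd_of_three_dvd_cyclicCorr (modProj n 5 a) (h1.trans h2.symm)
    (by rw [h0, h1]; omega)
  rw [h0, h1] at h9
  omega

theorem stmt5 (u : ℕ) (hu : 3 ≤ u)
    (hmod : u % 90 = 7 ∨ u % 90 = 13 ∨ u % 90 = 23 ∨ u % 90 = 43 ∨
            u % 90 = 47 ∨ u % 90 = 67 ∨ u % 90 = 77 ∨ u % 90 = 83) :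
    ¬ ∃ a : ℤ → ℤ, IsBinarySeq ((u ^ 2 + 1) / 2) a ∧
        HasConstAutocorr ((u ^ 2 + 1) / 2) a 1 :=
  stmt5_general u hmod
end

section
/- Let e be a prime with e ≡ 1 (mod 4), and let m be an odd integer with |m| ≥ 3 such that m is a quadratic non-residue modulo e. Then there exists an odd prime p such that v_p(m) is odd and p is semiprimitive modulo e. -/
/-! Since `e ≡ 1 (mod 4)`, `-1` is a square modulo `e`, so `|m|` is a non-square modulo `e`.
Writing `|m|` as a product of prime powers, some prime `p` occurring to an odd power must itself be
a non-square, and then Euler's criterion gives `p ^ ((e - 1) / 2) ≡ -1 (mod e)`. Such a `p`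
divides `m`, hence is odd. -/

theorem Nat.isSquare_cast_of_isSquare_of_odd_factorization {R : Type*} [CommSemiring R] (n : ℕ)
    (h : ∀ p, p.Prime → Odd (n.factorization p) → IsSquare (p : R)) : IsSquare (n : R) := by
  rcases eq_or_ne n 0 with rfl | hn
  · exact ⟨0, by simp⟩
  rw [← Nat.prod_factorization_pow_eq_self hn, Nat.cast_finsuppProd]
  refine Finset.prod_induction _ IsSquare (fun _ _ => IsSquare.mul) IsSquare.one fun p hp => ?_
  rcases Nat.even_or_odd (n.factorization p) with ⟨k, hk⟩ | hodd
  · exact ⟨(p : R) ^ k, by push_cast; rw [hk, pow_add]⟩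
  · push_cast
    exact (h p (Nat.prime_of_mem_primeFactors (by simpa using hp)) hodd).pow _

theorem Int.exists_prime_odd_padicValInt_not_isSquare {R : Type*} [CommRing R]
    (hneg : IsSquare (-1 : R)) {m : ℤ} (hm : ¬ IsSquare (m : R)) :
    ∃ p : ℕ, p.Prime ∧ Odd (padicValInt p m) ∧ ¬ IsSquare (p : R) := by
  by_contra! h
  have hnat : IsSquare (m.natAbs : R) :=
    Nat.isSquare_cast_of_isSquare_of_odd_factorization _ fun p hp hodd =>
      h p hp (by rwa [padicValInt, ← Nat.factorization_def _ hp])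
  rcases Int.natAbs_eq m with hm' | hm' <;> rw [hm'] at hm <;>
    simp only [Int.cast_neg, Int.cast_natCast] at hm
  · exact hm hnat
  · exact hm (by rw [← neg_one_mul]; exact hneg.mul hnat)

theorem semiprimitive_of_not_isSquare {e : ℕ} [Fact e.Prime] {a : ℤ}
    (ha : ¬ IsSquare (a : ZMod e)) : Semiprimitive a e := by
  have ha0 : (a : ZMod e) ≠ 0 := fun h => ha (h ▸ ⟨0, by simp⟩)
  have hpow : (a : ZMod e) ^ (e / 2) = -1 :=
    (ZMod.pow_div_two_eq_neg_one_or_one e ha0).resolve_left ((ZMod.euler_criterion e ha0).not.1 ha)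
  refine ⟨e / 2, Nat.div_pos (Fact.out : e.Prime).two_le two_pos, ?_⟩
  exact (ZMod.intCast_eq_intCast_iff _ _ _).1 (by push_cast; exact hpow)

theorem IsQNR.not_isSquare {m : ℤ} {e : ℕ} (h : IsQNR m e) : ¬ IsSquare (m : ZMod e) := by
  rintro ⟨y, hy⟩
  obtain ⟨x, rfl⟩ := ZMod.intCast_surjective y
  exact h.2 ⟨x, (ZMod.intCast_eq_intCast_iff _ _ _).1 (by push_cast; rw [hy, sq])⟩

theorem stmt6_general (e : ℕ) (he : e.Prime) (he4 : e % 4 = 1)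
    (m : ℤ) (hodd : Odd m) (hqnr : IsQNR m e) :
    ∃ p : ℕ, p.Prime ∧ Odd p ∧ Odd (padicValInt p m) ∧ Semiprimitive (p : ℤ) e := by
  have : Fact e.Prime := ⟨he⟩
  obtain ⟨p, hp, hval, hsq⟩ := Int.exists_prime_odd_padicValInt_not_isSquare
    (ZMod.exists_sq_eq_neg_one_iff.2 (by omega)) hqnr.not_isSquare
  have hdvd : (p : ℤ) ∣ m := by
    by_contra hndvd
    rw [padicValInt.eq_zero_of_not_dvd hndvd] at hval
    exact Nat.not_odd_zero hval
  exact ⟨p, hp, (Int.natAbs_odd.2 hodd).of_dvd_nat (Int.natCast_dvd.1 hdvd), hval,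
    semiprimitive_of_not_isSquare (by exact_mod_cast hsq)⟩

theorem stmt6 (e : ℕ) (he : e.Prime) (he4 : e % 4 = 1)
    (m : ℤ) (hodd : Odd m) (hm : 3 ≤ |m|) (hqnr : IsQNR m e) :
    ∃ p : ℕ, p.Prime ∧ Odd p ∧ Odd (padicValInt p m) ∧ Semiprimitive (p : ℤ) e :=
  stmt6_general e he he4 m hodd hqnr
end

section
/- Let A be a positive integer with A ≡ 27, 45, 51, or 69 (mod 72). Then there is no binary sequence of period (A²+3)/4 with all nontrivial autocorrelation values equal to 3. -/
open Finset

section GroupAutocorrelation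

variable {H G R : Type*} [AddCommGroup H] [Fintype H] [AddCommGroup G] [DecidableEq G]
  [CommRing R]

def groupAutocorr (b : H → R) (t : H) : R :=
  ∑ x, b x * b (x + t)

def fiberSum (π : H →+ G) (b : H → R) (c : G) : R :=
  ∑ x with π x = c, b x

theorem sum_fiber_groupAutocorr [Fintype G] (π : H →+ G) (b : H → R) (τ : G) :
    ∑ t with π t = τ, groupAutocorr b t = ∑ c, fiberSum π b c * fiberSum π b (c + τ) := by
  have shift (x : H) : ∑ t with π t = τ, b (x + t) = fiberSum π b (π x + τ) := by
    rw [fiberSum, sum_filter, sum_filter]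
    exact Fintype.sum_equiv (Equiv.addLeft x) _ _ fun t => by simp
  calc ∑ t with π t = τ, groupAutocorr b t
      = ∑ x, b x * fiberSum π b (π x + τ) := by
        simp only [groupAutocorr, ← shift, mul_sum]
        exact sum_comm
    _ = ∑ c, ∑ x with π x = c, b x * fiberSum π b (c + τ) := by
        rw [← sum_fiberwise univ π]
        refine sum_congr rfl fun c _ => sum_congr rfl fun x hx => ?_
        rw [(mem_filter.1 hx).2]
    _ = _ := by simp only [← sum_mul, fiberSum]

theorem card_fiber_eq_of_surjective {π : H →+ G} (hπ : Function.Surjective π) (c c' : G) :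
    #{x | π x = c} = #{x | π x = c'} := by
  obtain ⟨s, hs⟩ := hπ (c' - c)
  refine card_nbij' (· + s) (· - s) (fun x hx => ?_) (fun x hx => ?_)
    (fun x _ => add_sub_cancel_right x s) (fun x _ => sub_add_cancel x s)
  all_goals simp_all

theorem sum_fiber_zero_sub_sum_fiber_groupAutocorr {π : H →+ G} (hπ : Function.Surjective π)
    (b : H → R) {τ : G} (hτ : τ ≠ 0) {d : R} (hconst : ∀ t ≠ 0, groupAutocorr b t = d) :
    ∑ t with π t = 0, groupAutocorr b t - ∑ t with π t = τ, groupAutocorr b t =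
      groupAutocorr b 0 - d := by
  -- Both fibres have the same size, so subtracting `d` termwise changes nothing.
  calc ∑ t with π t = 0, groupAutocorr b t - ∑ t with π t = τ, groupAutocorr b t
      = ∑ t with π t = 0, (groupAutocorr b t - d) -
          ∑ t with π t = τ, (groupAutocorr b t - d) := by
        simp only [sum_sub_distrib, sum_const, card_fiber_eq_of_surjective hπ 0 τ]
        ring
    _ = (groupAutocorr b 0 - d) - 0 := by
        congr 1
        · exact sum_eq_single_of_mem 0 (by simp) fun t _ ht => by rw [hconst t ht, sub_self]
        · refine sum_eq_zero fun t ht => ?_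
          rw [hconst t ?_, sub_self]
          rintro rfl
          exact hτ (by simpa using (mem_filter.1 ht).2.symm)
    _ = _ := sub_zero _

theorem groupAutocorr_zero_of_sq_eq_one {b : H → R} (hb : ∀ x, b x ^ 2 = 1) :
    groupAutocorr b 0 = Fintype.card H := by
  simp [groupAutocorr, ← sq, hb]

end GroupAutocorrelation

theorem sum_mul_self_sub_sum_mul_add_one_zmod_three {R : Type*} [CommRing R] (S : ZMod 3 → R) :
    ∑ c, S c * S c - ∑ c, S c * S (c + 1) =
      (S 0 - S 1) ^ 2 + (S 0 - S 1) * (S 1 - S 2) + (S 1 - S 2) ^ 2 := by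
  rw [show (univ : Finset (ZMod 3)) = {0, 1, 2} from rfl]
  simp only [sum_insert (by decide : (0 : ZMod 3) ∉ ({1, 2} : Finset _)),
    sum_pair (by decide : (1 : ZMod 3) ≠ 2)]
  rw [show (0 + 1 : ZMod 3) = 1 from rfl, show (1 + 1 : ZMod 3) = 2 from rfl,
    show (2 + 1 : ZMod 3) = 0 from rfl]
  ring

theorem Function.Periodic.apply_zmod_val {n : ℕ} [NeZero n] {a : ℤ → ℤ}
    (h : Function.Periodic a n) (z : ℤ) : a (z : ZMod n).val = a z := by
  rw [ZMod.val_intCast, Int.emod_def, mul_comm]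
  exact h.sub_zsmul_eq (z / n)

theorem autocorr_eq_groupAutocorr {n : ℕ} [NeZero n] {a : ℤ → ℤ} (h : Function.Periodic a n)
    (t : ℤ) : autocorr n a t = groupAutocorr (fun x : ZMod n => a x.val) t := by
  refine sum_nbij' (fun i => (i : ZMod n)) ZMod.val (by simp) (fun x _ => by simp [ZMod.val_lt])
    (fun i hi => ZMod.val_cast_of_lt (mem_range.1 hi)) (fun x _ => ZMod.natCast_zmod_val x)
    fun i _ => ?_
  rw [← h.apply_zmod_val i, ← h.apply_zmod_val (i + t)]
  push_cast
  rfl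

theorem exists_sq_add_mul_add_sq_eq_sub_of_hasConstAutocorr {n : ℕ} [NeZero n] (h3 : 3 ∣ n)
    {a : ℤ → ℤ} {d : ℤ} (ha : IsBinarySeq n a) (hC : HasConstAutocorr n a d) :
    ∃ u v : ℤ, u ^ 2 + u * v + v ^ 2 = n - d := by
  set b : ZMod n → ℤ := fun x => a x.val
  have hconst (t : ZMod n) (ht : t ≠ 0) : groupAutocorr b t = d := by
    have hpos : 0 < t.val := Nat.pos_of_ne_zero ((ZMod.val_ne_zero t).2 ht)
    have hlt : t.val < n := ZMod.val_lt t
    rw [← hC t.val (by omega) (by omega), autocorr_eq_groupAutocorr ha.2]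
    simp [b]
  have hzero : groupAutocorr b 0 = n := by
    rw [groupAutocorr_zero_of_sq_eq_one fun x => ?_, ZMod.card]
    rcases ha.1 (x.val : ℤ) with h | h <;> simp only [b, h] <;> norm_num
  have key := sum_fiber_zero_sub_sum_fiber_groupAutocorr
    (π := (ZMod.castHom h3 (ZMod 3)).toAddMonoidHom) (ZMod.castHom_surjective h3) b one_ne_zero
    hconst
  simp only [sum_fiber_groupAutocorr, add_zero, hzero] at key
  rw [sum_mul_self_sub_sum_mul_add_one_zmod_three] at key
  exact ⟨_, _, key⟩

theorem ZMod.sq_add_add_one_ne_zero {q : ℕ} [Fact q.Prime] (hq : q % 3 = 2) (z : ZMod q) :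
    z ^ 2 + z + 1 ≠ 0 := by
  intro hz
  have hcube : z ^ 3 = 1 := by linear_combination (z - 1) * hz
  -- Fermat: `z = z ^ q = (z ^ 3) ^ (q / 3) * z ^ 2 = z ^ 2`, so `z = z ^ 3 = 1` and `3 = 0`.
  have hsq : z ^ 2 = z :=
    calc z ^ 2 = (z ^ 3) ^ (q / 3) * z ^ 2 := by rw [hcube, one_pow, one_mul]
      _ = z ^ (3 * (q / 3) + q % 3) := by rw [hq]; ring
      _ = z := by rw [Nat.div_add_mod, ZMod.pow_card]
  have hone : z = 1 := by linear_combination hcube - (z + 1) * hsq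
  have h3 : ((3 : ℕ) : ZMod q) = 0 := by rw [hone] at hz; push_cast; linear_combination hz
  have := (Nat.prime_dvd_prime_iff_eq Fact.out Nat.prime_three).1
    ((ZMod.natCast_eq_zero_iff 3 q).1 h3)
  omega

theorem Int.prime_dvd_and_dvd_of_dvd_sq_add_mul_add_sq {q : ℕ} (hq : q.Prime) (hq3 : q % 3 = 2)
    {u v : ℤ} (h : (q : ℤ) ∣ u ^ 2 + u * v + v ^ 2) : (q : ℤ) ∣ u ∧ (q : ℤ) ∣ v := by
  have := Fact.mk hq
  simp only [← ZMod.intCast_zmod_eq_zero_iff_dvd] at h ⊢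
  push_cast at h
  by_cases hv : (v : ZMod q) = 0
  · rw [hv] at h ⊢
    exact ⟨pow_eq_zero_iff two_ne_zero |>.1 (by simpa using h), rfl⟩
  · refine absurd ?_ (ZMod.sq_add_add_one_ne_zero hq3 (u / v))
    field_simp
    linear_combination h

theorem Nat.even_factorization_of_eq_sq_add_mul_add_sq {q : ℕ} (hq : q.Prime) (hq3 : q % 3 = 2)
    (N : ℕ) : ∀ u v : ℤ, (N : ℤ) = u ^ 2 + u * v + v ^ 2 → Even (N.factorization q) := by
  induction N using Nat.strong_induction_on with
  | _ N ih =>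
  intro u v hN
  by_cases hqN : q ∣ N
  swap
  · simp [Nat.factorization_eq_zero_of_not_dvd hqN]
  rcases eq_or_ne N 0 with rfl | hN0
  · simp
  obtain ⟨⟨u', rfl⟩, ⟨v', rfl⟩⟩ :=
    Int.prime_dvd_and_dvd_of_dvd_sq_add_mul_add_sq hq hq3 (hN ▸ Int.natCast_dvd_natCast.2 hqN)
  obtain ⟨N', hN'⟩ : q ^ 2 ∣ N := by
    rw [← Int.natCast_dvd_natCast, hN]
    exact ⟨u' ^ 2 + u' * v' + v' ^ 2, by push_cast; ring⟩
  have hN'0 : N' ≠ 0 := by rintro rfl; simp_all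
  have hlt : N' < N := by
    rw [hN']
    exact lt_mul_left (Nat.pos_of_ne_zero hN'0) (Nat.one_lt_pow two_ne_zero hq.one_lt)
  have hN'uv : (N' : ℤ) = u' ^ 2 + u' * v' + v' ^ 2 := by
    apply mul_left_cancel₀ (pow_ne_zero 2 (Int.natCast_ne_zero.2 hq.ne_zero))
    rw [← Int.natCast_pow, ← Int.natCast_mul, ← hN', hN]
    push_cast
    ring
  rw [hN', Nat.factorization_mul (pow_ne_zero 2 hq.ne_zero) hN'0, Finsupp.add_apply,
    hq.factorization_pow, Finsupp.single_eq_same]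
  exact even_two.add (ih N' hlt u' v' hN'uv)

theorem Nat.mod_three_eq_one_of_even_factorization {w : ℕ} (h3 : ¬ 3 ∣ w)
    (hev : ∀ q : ℕ, q.Prime → q % 3 = 2 → Even (w.factorization q)) : w % 3 = 1 := by
  have hw : w ≠ 0 := by rintro rfl; exact h3 (dvd_zero 3)
  suffices (w : ZMod 3) = 1 by
    simpa using (ZMod.natCast_eq_natCast_iff' w 1 3).1 (by simpa using this)
  rw [← Nat.prod_factorization_pow_eq_self hw, Nat.cast_finsuppProd]
  refine Finset.prod_eq_one fun p hp => ?_
  dsimp only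
  have hpp : p.Prime := Nat.prime_of_mem_primeFactors hp
  have hpw : p ∣ w := Nat.dvd_of_mem_primeFactors hp
  have hp3 : p % 3 = 1 ∨ p % 3 = 2 := by
    have : ¬ 3 ∣ p := fun h => h3 (h.trans hpw)
    omega
  rw [Nat.cast_pow, ← ZMod.natCast_mod p]
  rcases hp3 with h | h
  · simp [h]
  · rw [h, show ((2 : ℕ) : ZMod 3) = -1 by decide]
    exact (hev p hpp h).neg_one_pow

theorem Nat.Coprime.even_factorization_left {a b q : ℕ} (hab : a.Coprime b)
    (h : Even ((a * b).factorization q)) : Even (a.factorization q) := by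
  rw [Nat.factorization_mul_of_coprime hab, Finsupp.add_apply] at h
  by_cases ha : a.factorization q = 0
  · simp [ha]
  have hb : b.factorization q = 0 := by
    by_contra hb
    simp only [← Finsupp.mem_support_iff, Nat.support_factorization] at ha hb
    exact Finset.disjoint_left.1 hab.disjoint_primeFactors ha hb
  simpa [hb] using h

theorem sq_add_mul_add_sq_ne_mul_of_coprime {w r : ℕ} (hw : w % 3 = 2) (hwr : w.Coprime r)
    (u v : ℤ) : u ^ 2 + u * v + v ^ 2 ≠ (w * r : ℕ) := by
  intro h
  have := Nat.mod_three_eq_one_of_even_factorization (by omega) fun q hq hq3 =>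
    hwr.even_factorization_left (Nat.even_factorization_of_eq_sq_add_mul_add_sq hq hq3 _ u v h.symm)
  omega

theorem sq_add_mul_add_sq_ne_nine_mul_mul_succ {m : ℕ} (hm : m % 3 ≠ 0) (u v : ℤ) :
    u ^ 2 + u * v + v ^ 2 ≠ 9 * m * (m + 1) := by
  have coprime_nine {w : ℕ} (hw : w % 3 = 2) : w.Coprime (3 ^ 2) :=
    (Nat.coprime_comm.1 ((Nat.Prime.coprime_iff_not_dvd Nat.prime_three).2 (by omega))).pow_right 2
  rcases (by omega : m % 3 = 1 ∨ m % 3 = 2) with h | h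
  · convert sq_add_mul_add_sq_ne_mul_of_coprime (w := m + 1) (r := 3 ^ 2 * m) (by omega)
      ((coprime_nine (by omega)).mul_right (Nat.coprime_self_add_left.2 (Nat.coprime_one_left m)))
      u v using 1
    push_cast; ring
  · convert sq_add_mul_add_sq_ne_mul_of_coprime (w := m) (r := 3 ^ 2 * (m + 1)) h
      ((coprime_nine h).mul_right (Nat.coprime_self_add_right.2 (Nat.coprime_one_right m)))
      u v using 1
    push_cast; ring

theorem stmt15_general (A : ℕ)
    (hmod : A % 72 = 27 ∨ A % 72 = 45 ∨ A % 72 = 51 ∨ A % 72 = 69) :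
    ¬ ∃ a : ℤ → ℤ, IsBinarySeq ((A ^ 2 + 3) / 4) a ∧
        HasConstAutocorr ((A ^ 2 + 3) / 4) a 3 := by
  rintro ⟨a, ha, hC⟩
  obtain ⟨m, rfl, hm⟩ : ∃ m, A = 6 * m + 3 ∧ m % 3 ≠ 0 := ⟨A / 6, by omega, by omega⟩
  have hn : ((6 * m + 3) ^ 2 + 3) / 4 = 9 * m * (m + 1) + 3 :=
    Nat.div_eq_of_eq_mul_left (by norm_num) (by ring)
  rw [hn] at ha hC
  have : NeZero (9 * m * (m + 1) + 3) := ⟨by omega⟩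
  obtain ⟨u, v, huv⟩ :=
    exists_sq_add_mul_add_sq_eq_sub_of_hasConstAutocorr ⟨3 * m * (m + 1) + 1, by ring⟩ ha hC
  exact sq_add_mul_add_sq_ne_nine_mul_mul_succ hm u v (by rw [huv]; push_cast; ring)

theorem stmt15 (A : ℕ) (hA : 0 < A)
    (hmod : A % 72 = 27 ∨ A % 72 = 45 ∨ A % 72 = 51 ∨ A % 72 = 69) :
    ¬ ∃ a : ℤ → ℤ, IsBinarySeq ((A ^ 2 + 3) / 4) a ∧
        HasConstAutocorr ((A ^ 2 + 3) / 4) a 3 :=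
  stmt15_general A hmod
end
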